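/- Let g₁, …, g_M be vectors in ℝⁿ, let F = Σ_{i=1}^{M} gᵢ gᵢᵀ, let N ≤ M, let F̃ = Σ_{i=1}^{N} gᵢ gᵢᵀ, and let ε be a real number with 0 < ε < 1. Assume F is positive definite (hence F̃ too, given the tail condition) and that the tail satisfies Σ_{i=N+1}^{M} gᵢ gᵢᵀ ≼ ε·F. Then every eigenvalue of F̃^{-1/2} F F̃^{-1/2} lies in the interval [1/(1+ε), 1/(1−ε)], and hence the operator norm of F̃^{-1/2} F F̃^{-1/2} − I is at most ε/(1−ε). -/

import Mathlib

open Finset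

section

open scoped ComplexOrder

/-- The positive semidefinite square root of a positive semidefinite matrix (the definition of
`Matrix.PosSemidef.sqrt` in the older Mathlib, which has since been removed). -/
noncomputable def Matrix.PosSemidef.sqrt {n 𝕜 : Type*} [Fintype n] [DecidableEq n] [RCLike 𝕜]
    {A : Matrix n n 𝕜} (hA : A.PosSemidef) : Matrix n n 𝕜 :=
  hA.1.eigenvectorUnitary.1 * Matrix.diagonal ((↑) ∘ (√·) ∘ hA.1.eigenvalues) *
  (star hA.1.eigenvectorUnitary : Matrix n n 𝕜)

end

open Finset Matrix

theorem Matrix.PosSemidef.posSemidef_sqrt {n : Type*} [Fintype n] [DecidableEq n]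
    {A : Matrix n n ℝ} (hA : A.PosSemidef) : hA.sqrt.PosSemidef := by
  unfold Matrix.PosSemidef.sqrt
  have hD : (Matrix.diagonal ((↑) ∘ (√·) ∘ hA.1.eigenvalues) : Matrix n n ℝ).PosSemidef :=
    Matrix.PosSemidef.diagonal (fun i => by simp [Real.sqrt_nonneg])
  have := hD.mul_mul_conjTranspose_same (hA.1.eigenvectorUnitary : Matrix n n ℝ)
  rw [Matrix.star_eq_conjTranspose]
  exact this

theorem Matrix.PosSemidef.sqrt_mul_self {n : Type*} [Fintype n] [DecidableEq n]
    {A : Matrix n n ℝ} (hA : A.PosSemidef) : hA.sqrt * hA.sqrt = A := by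
  unfold Matrix.PosSemidef.sqrt
  have hUU : (star hA.1.eigenvectorUnitary : Matrix n n ℝ) * hA.1.eigenvectorUnitary.1 = 1 :=
    Unitary.coe_star_mul_self _
  have hspec := hA.1.spectral_theorem
  simp only [Unitary.conjStarAlgAut_apply] at hspec
  conv_rhs => rw [hspec]
  rw [show ∀ U D V : Matrix n n ℝ, U * D * V * (U * D * V) = U * D * (V * U) * D * V by
    intro U D V; simp only [mul_assoc], hUU, mul_one,
    mul_assoc _ (Matrix.diagonal _) (Matrix.diagonal _), Matrix.diagonal_mul_diagonal]
  congr 3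
  funext i
  simp [Real.mul_self_sqrt (hA.eigenvalues_nonneg i)]

set_option maxHeartbeats 1000000

private lemma outer_psd {n : ℕ} (g : Fin n → ℝ) : (Matrix.vecMulVec g g).PosSemidef := by
  refine Matrix.PosSemidef.of_dotProduct_mulVec_nonneg ?_ ?_
  · ext i j
    simp [Matrix.vecMulVec, Matrix.conjTranspose_apply, mul_comm]
  · intro x
    have h : Matrix.vecMulVec g g *ᵥ x = (g ⬝ᵥ x) • g := by
      ext i
      simp [Matrix.mulVec, Matrix.vecMulVec, dotProduct, Finset.mul_sum,
        Finset.sum_mul, mul_comm, mul_assoc, mul_left_comm]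
    rw [h]
    simp only [star_trivial, dotProduct_smul, smul_eq_mul]
    rw [dotProduct_comm]
    exact mul_self_nonneg _

private lemma dsym {n : ℕ} {P : Matrix (Fin n) (Fin n) ℝ} (hP : P.IsHermitian)
    (a b : Fin n → ℝ) : (P *ᵥ a) ⬝ᵥ b = a ⬝ᵥ (P *ᵥ b) := by
  have htr : Pᵀ = P := by
    ext i j
    simpa using hP.apply i j
  rw [Matrix.dotProduct_mulVec a P b, ← htr, Matrix.vecMul_transpose, htr,
    dotProduct_comm]

private lemma main_aux {n : ℕ} (ε : ℝ) (hε0 : 0 < ε) (hε1 : ε < 1)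
    (F Ft T S : Matrix (Fin n) (Fin n) ℝ)
    (hsplit : Ft + T = F) (hT : T.PosSemidef)
    (htail : (ε • F - T).PosSemidef)
    (hS : S.PosSemidef) (hSFtS : S * Ft * S = 1) :
    (∀ lam : ℝ, ∀ v : Fin n → ℝ, v ≠ 0 →
        (S * F * S).mulVec v = lam • v →
        lam ∈ Set.Icc (1 / (1 + ε)) (1 / (1 - ε))) ∧
      ‖Matrix.toEuclideanCLM (𝕜 := ℝ) (n := Fin n) (S * F * S - 1)‖ ≤ ε / (1 - ε) := by
  set A : Matrix (Fin n) (Fin n) ℝ := S * F * S with hAdef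
  have hA1 : (A - 1).PosSemidef := by
    have h := hT.mul_mul_conjTranspose_same S
    rw [hS.1] at h
    have heq : A - 1 = S * T * S := by
      rw [hAdef, ← hsplit, mul_add, add_mul, hSFtS, add_sub_cancel_left]
    rwa [heq]
  have hA2 : ((1 : Matrix (Fin n) (Fin n) ℝ) - (1 - ε) • A).PosSemidef := by
    have h := htail.mul_mul_conjTranspose_same S
    rw [hS.1] at h
    have heq : S * (ε • F - T) * S = 1 - (1 - ε) • A := by
      have hTe : T = F - Ft := by rw [← hsplit]; abel
      rw [hTe, hAdef, ← hSFtS, sub_smul, one_smul]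
      simp only [mul_sub, sub_mul, mul_smul_comm, smul_mul_assoc]
      abel
    rwa [heq] at h
  have hq1 : ∀ w : Fin n → ℝ, w ⬝ᵥ w ≤ w ⬝ᵥ (A *ᵥ w) := by
    intro w
    have h := hA1.dotProduct_mulVec_nonneg w
    rw [star_trivial, Matrix.sub_mulVec, Matrix.one_mulVec, dotProduct_sub] at h
    linarith
  have hq2 : ∀ w : Fin n → ℝ, (1 - ε) * (w ⬝ᵥ (A *ᵥ w)) ≤ w ⬝ᵥ w := by
    intro w
    have h := hA2.dotProduct_mulVec_nonneg w
    rw [star_trivial, Matrix.sub_mulVec, Matrix.one_mulVec, dotProduct_sub,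
      Matrix.smul_mulVec, dotProduct_smul, smul_eq_mul] at h
    linarith
  constructor
  · intro lam v hv0 hv
    have hq : 0 < v ⬝ᵥ v := by
      have h := Matrix.dotProduct_self_star_pos_iff (v := v)
      rw [star_trivial] at h
      exact h.mpr hv0
    have hAv : v ⬝ᵥ (A *ᵥ v) = lam * (v ⬝ᵥ v) := by
      rw [hv, dotProduct_smul, smul_eq_mul]
    have hlow : 1 ≤ lam := by
      have h := hq1 v
      rw [hAv] at h
      nlinarith
    have hhigh : lam ≤ 1 / (1 - ε) := by
      have h := hq2 v
      rw [hAv] at h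
      rw [le_div_iff₀ (by linarith)]
      nlinarith
    constructor
    · have h : 1 / (1 + ε) ≤ 1 := by
        rw [div_le_one (by linarith)]; linarith
      linarith
    · exact hhigh
  · have hc' : (0:ℝ) ≤ ε / (1 - ε) := div_nonneg hε0.le (by linarith)
    apply ContinuousLinearMap.opNorm_le_bound _ hc'
    intro x
    set y : Fin n → ℝ := WithLp.equiv 2 (Fin n → ℝ) x with hydef
    set B : Matrix (Fin n) (Fin n) ℝ := A - 1 with hBdef
    have happ : Matrix.toEuclideanCLM (𝕜 := ℝ) (n := Fin n) B x =
        (WithLp.equiv 2 (Fin n → ℝ)).symm (B *ᵥ y) := by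
      apply (WithLp.equiv 2 (Fin n → ℝ)).injective
      rw [Equiv.apply_symm_apply]
      exact Matrix.ofLp_toEuclideanCLM B x
    have hnorm : ∀ w : Fin n → ℝ,
        ‖(WithLp.equiv 2 (Fin n → ℝ)).symm w‖ = Real.sqrt (w ⬝ᵥ w) := by
      intro w
      rw [EuclideanSpace.norm_eq]
      congr 1
      simp [dotProduct, sq_abs, sq]
    have hxnorm : ‖x‖ = Real.sqrt (y ⬝ᵥ y) := by
      rw [← hnorm y, hydef, Equiv.symm_apply_apply]
    have hqB : ∀ w : Fin n → ℝ, w ⬝ᵥ (B *ᵥ w) ≤ (ε / (1 - ε)) * (w ⬝ᵥ w) := by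
      intro w
      have h1 := hq2 w
      have h2 : w ⬝ᵥ (B *ᵥ w) = w ⬝ᵥ (A *ᵥ w) - w ⬝ᵥ w := by
        rw [hBdef, Matrix.sub_mulVec, Matrix.one_mulVec, dotProduct_sub]
      rw [h2, div_mul_eq_mul_div, le_div_iff₀ (by linarith)]
      nlinarith
    have hBpsd : B.PosSemidef := hA1
    set R : Matrix (Fin n) (Fin n) ℝ := hBpsd.sqrt with hRdef
    have hR : R.PosSemidef := hBpsd.posSemidef_sqrt
    have hRR : R * R = B := hBpsd.sqrt_mul_self
    have hstep0 : (B *ᵥ y) ⬝ᵥ (B *ᵥ y) = (R *ᵥ y) ⬝ᵥ (B *ᵥ (R *ᵥ y)) := by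
      have hBy : B *ᵥ y = R *ᵥ R *ᵥ y := by rw [Matrix.mulVec_mulVec, hRR]
      calc (B *ᵥ y) ⬝ᵥ (B *ᵥ y) = (R *ᵥ (R *ᵥ y)) ⬝ᵥ (R *ᵥ (R *ᵥ y)) := by rw [hBy]
        _ = (R *ᵥ y) ⬝ᵥ (R *ᵥ (R *ᵥ (R *ᵥ y))) := dsym hR.1 (R *ᵥ y) (R *ᵥ (R *ᵥ y))
        _ = (R *ᵥ y) ⬝ᵥ (B *ᵥ (R *ᵥ y)) := by
            rw [Matrix.mulVec_mulVec (R *ᵥ y) R R, hRR]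
    have hstep2 : (R *ᵥ y) ⬝ᵥ (R *ᵥ y) = y ⬝ᵥ (B *ᵥ y) := by
      rw [dsym hR.1 y (R *ᵥ y), Matrix.mulVec_mulVec, hRR]
    have hBynn : 0 ≤ y ⬝ᵥ (B *ᵥ y) := by simpa using hBpsd.dotProduct_mulVec_nonneg y
    have hynn : 0 ≤ y ⬝ᵥ y := by
      simpa [star_trivial] using dotProduct_self_star_nonneg y
    have hkey : ((B *ᵥ y) ⬝ᵥ (B *ᵥ y)) ≤ (ε / (1 - ε))^2 * (y ⬝ᵥ y) := by
      have h1 := hqB (R *ᵥ y)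
      have h2 := hqB y
      rw [hstep2] at h1
      rw [hstep0]
      calc (R *ᵥ y) ⬝ᵥ (B *ᵥ (R *ᵥ y)) ≤ (ε / (1 - ε)) * (y ⬝ᵥ (B *ᵥ y)) := h1
        _ ≤ (ε / (1 - ε)) * ((ε / (1 - ε)) * (y ⬝ᵥ y)) := by
            exact mul_le_mul_of_nonneg_left h2 hc'
        _ = (ε / (1 - ε))^2 * (y ⬝ᵥ y) := by ring
    rw [happ, hnorm, hxnorm]
    calc Real.sqrt ((B *ᵥ y) ⬝ᵥ (B *ᵥ y)) ≤ Real.sqrt ((ε / (1 - ε))^2 * (y ⬝ᵥ y)) :=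
          Real.sqrt_le_sqrt hkey
      _ = (ε / (1 - ε)) * Real.sqrt (y ⬝ᵥ y) := by
          rw [Real.sqrt_mul (sq_nonneg _), Real.sqrt_sq hc']

/-- Let `g 1, …, g M` be vectors in `ℝⁿ`, let `F = ∑_{i < M} gᵢ gᵢᵀ`, let
`N ≤ M`, let `F̃ = ∑_{i < N} gᵢ gᵢᵀ`, and let `0 < ε < 1`.  Assume `F` is positive definite and
that the tail satisfies `∑_{N ≤ i < M} gᵢ gᵢᵀ ≼ ε • F`.  Then `F̃` is positive definite as well,
every eigenvalue of `F̃^{-1/2} * F * F̃^{-1/2}` lies in `[1 / (1 + ε), 1 / (1 - ε)]`, and hence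
the (L2) operator norm of `F̃^{-1/2} * F * F̃^{-1/2} - I` is at most `ε / (1 - ε)`.  Here
`F̃^{-1/2}` is the positive semidefinite square root of `F̃⁻¹`. -/
theorem fisher_subset_theorem
    {n : ℕ} (M N : ℕ) (hNM : N ≤ M) (g : ℕ → Fin n → ℝ)
    (ε : ℝ) (hε0 : 0 < ε) (hε1 : ε < 1)
    (F Ft : Matrix (Fin n) (Fin n) ℝ)
    (hF : F = ∑ i ∈ range M, Matrix.vecMulVec (g i) (g i))
    (hFt : Ft = ∑ i ∈ range N, Matrix.vecMulVec (g i) (g i))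
    (hFpd : F.PosDef)
    (htail : (ε • F - ∑ i ∈ Ico N M, Matrix.vecMulVec (g i) (g i)).PosSemidef) :
    ∃ hFtpd : Ft.PosDef,
      (∀ lam : ℝ, ∀ v : Fin n → ℝ, v ≠ 0 →
        (hFtpd.inv.posSemidef.sqrt * F * hFtpd.inv.posSemidef.sqrt).mulVec v = lam • v →
        lam ∈ Set.Icc (1 / (1 + ε)) (1 / (1 - ε))) ∧
      ‖Matrix.toEuclideanCLM (𝕜 := ℝ) (n := Fin n)
          (hFtpd.inv.posSemidef.sqrt * F * hFtpd.inv.posSemidef.sqrt - 1)‖ ≤ ε / (1 - ε) := by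
  set T : Matrix (Fin n) (Fin n) ℝ := ∑ i ∈ Ico N M, Matrix.vecMulVec (g i) (g i) with hTdef
  have hsplit : Ft + T = F := by
    rw [hF, hFt, hTdef, Finset.sum_range_add_sum_Ico _ hNM]
  have hT : T.PosSemidef := by
    rw [hTdef]
    exact Finset.sum_induction _ _ (fun a b ha hb => ha.add hb) Matrix.PosSemidef.zero
      (fun i _ => outer_psd (g i))
  have hFtpsd : Ft.PosSemidef := by
    rw [hFt]
    exact Finset.sum_induction _ _ (fun a b ha hb => ha.add hb) Matrix.PosSemidef.zero
      (fun i _ => outer_psd (g i))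
  have hFtpd : Ft.PosDef := by
    refine Matrix.PosDef.of_dotProduct_mulVec_pos hFtpsd.1 (fun x hx => ?_)
    have h1 : 0 ≤ x ⬝ᵥ ((ε • F - T) *ᵥ x) := by simpa using htail.dotProduct_mulVec_nonneg x
    have h2 : 0 ≤ x ⬝ᵥ (T *ᵥ x) := by simpa using hT.dotProduct_mulVec_nonneg x
    have h3 : 0 < x ⬝ᵥ (F *ᵥ x) := by simpa using hFpd.dotProduct_mulVec_pos hx
    have hFx : F *ᵥ x = Ft *ᵥ x + T *ᵥ x := by rw [← hsplit, Matrix.add_mulVec]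
    rw [Matrix.sub_mulVec, dotProduct_sub, Matrix.smul_mulVec,
      dotProduct_smul, smul_eq_mul, hFx, dotProduct_add] at h1
    simp only [star_trivial]
    rw [hFx, dotProduct_add] at h3
    nlinarith
  have hS : (hFtpd.inv.posSemidef.sqrt).PosSemidef := hFtpd.inv.posSemidef.posSemidef_sqrt
  have hSS : hFtpd.inv.posSemidef.sqrt * hFtpd.inv.posSemidef.sqrt = Ft⁻¹ :=
    hFtpd.inv.posSemidef.sqrt_mul_self
  have hdet : IsUnit Ft.det := (Matrix.isUnit_iff_isUnit_det Ft).mp hFtpd.isUnit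
  have hSFtS : hFtpd.inv.posSemidef.sqrt * Ft * hFtpd.inv.posSemidef.sqrt = 1 := by
    have h1 : hFtpd.inv.posSemidef.sqrt * (hFtpd.inv.posSemidef.sqrt * Ft) = 1 := by
      rw [← mul_assoc, hSS, Matrix.nonsing_inv_mul _ hdet]
    exact mul_eq_one_comm.mp h1
  obtain ⟨h1, h2⟩ := main_aux ε hε0 hε1 F Ft T hFtpd.inv.posSemidef.sqrt hsplit hT htail hS hSFtS
  exact ⟨hFtpd, h1, h2⟩
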